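/- Let X, Y be events with P[Y] ≥ γ > 0. Suppose p̂_{XY} and p̂_Y are estimates satisfying |p̂_{XY} − P[X ∩ Y]| ≤ αγ(1−μ)/2 and |p̂_Y − P[Y]| ≤ μγ/2, where 0 < μ < 1 and 0 < α. Assume p̂_Y > 0. Then the ratio p̂ = p̂_{XY}/p̂_Y satisfies (1−μ)·P[X|Y] − α ≤ p̂ ≤ (1+μ)·P[X|Y] + α. -/
import Mathlib

open MeasureTheory

/-- Conditional probability as a real number: `P[A | B] = P(A ∩ B) / P(B)`. -/
noncomputable def condP {Ω : Type*} [MeasurableSpace Ω] (μ : Measure Ω) (A B : Set Ω) : ℝ :=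
  (μ (A ∩ B)).toReal / (μ B).toReal

theorem stmt_9 {Ω : Type*} [MeasurableSpace Ω] (μ : Measure Ω) [IsProbabilityMeasure μ]
    (X Y : Set Ω) (γ α μ' : ℝ) (hγ0 : 0 < γ) (hα0 : 0 < α) (hμ'0 : 0 < μ') (hμ'1 : μ' < 1)
    (hY : γ ≤ (μ Y).toReal)
    (pXY pY : ℝ) (hpY : 0 < pY)
    (hXY : |pXY - (μ (X ∩ Y)).toReal| ≤ α * γ * (1 - μ') / 2)
    (hYest : |pY - (μ Y).toReal| ≤ μ' * γ / 2) :
    (1 - μ') * condP μ X Y - α ≤ pXY / pY ∧ pXY / pY ≤ (1 + μ') * condP μ X Y + α := by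
  set q : ℝ := (μ (X ∩ Y)).toReal with hq
  set r : ℝ := (μ Y).toReal with hr
  have hr0 : 0 < r := lt_of_lt_of_le hγ0 hY
  have hq0 : 0 ≤ q := ENNReal.toReal_nonneg
  have hcond : condP μ X Y = q / r := rfl
  obtain ⟨hXY1, hXY2⟩ := abs_le.mp hXY
  obtain ⟨hY1, hY2⟩ := abs_le.mp hYest
  have hc : q / r * r = q := div_mul_cancel₀ q (ne_of_gt hr0)
  have hc0 : 0 ≤ q / r := div_nonneg hq0 hr0.le
  constructor
  · rw [hcond, sub_le_iff_le_add, div_add' _ _ _ (ne_of_gt hpY), le_div_iff₀ hpY] at *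
    nlinarith [mul_nonneg hc0 hμ'0.le, mul_le_mul_of_nonneg_left hY (mul_nonneg hc0 hμ'0.le),
      mul_le_mul_of_nonneg_left hY2 hc0, mul_pos hα0 hγ0, mul_pos hμ'0 hγ0,
      mul_nonneg (mul_nonneg hc0 hμ'0.le) (mul_nonneg hμ'0.le hγ0.le)]
  · rw [hcond, div_le_iff₀ hpY]
    nlinarith [mul_le_mul_of_nonneg_left hY1 (mul_nonneg (by linarith : (0:ℝ) ≤ 1 + μ') hc0),
      mul_le_mul_of_nonneg_left hY (mul_nonneg (mul_nonneg hc0 hμ'0.le) (by linarith : (0:ℝ) ≤ 1 + μ')),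
      mul_nonneg (mul_nonneg (mul_nonneg hc0 hr0.le) hμ'0.le) (by linarith : (0:ℝ) ≤ 1 - μ'),
      mul_le_mul_of_nonneg_left hY1 hα0.le,
      mul_le_mul_of_nonneg_left hY (mul_nonneg hα0.le hμ'0.le),
      mul_pos hα0 hγ0, mul_pos (mul_pos hα0 hr0) hμ'0]
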